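/- Let G and H be non-trivial graphs where H is not isomorphic to K_2 and not complete. Then tn(G ∘ H) = 2 if and only if G has a universal vertex and tn(H) = 2. -/

import Mathlib

open SimpleGraph

/-- A walk `W` between `u` and `v` is a *tolled walk* if either `u = v` and `W` is trivial,
or `u` and `v` are adjacent and `W` is the single-edge walk, or `u ≠ v` are non-adjacent,
`W` has at least one interior vertex, `u` is adjacent exactly to the interior vertex
at position 1 and `v` exactly to the interior vertex at position `W.length - 1`. -/
def IsTolledWalk {V : Type*} (G : SimpleGraph V) {u v : V} (W : G.Walk u v) : Prop :=
  (u = v ∧ W.length = 0) ∨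
  (G.Adj u v ∧ W.support = [u, v]) ∨
  (¬ G.Adj u v ∧ u ≠ v ∧ 2 ≤ W.length ∧
    (∀ i, 0 < i → i < W.length → (G.Adj u (W.support.getD i u) ↔ i = 1)) ∧
    (∀ i, 0 < i → i < W.length → (G.Adj v (W.support.getD i u) ↔ i = W.length - 1)))

/-- The toll interval between `u` and `v`: vertices lying on some tolled walk. -/
def tollInterval {V : Type*} (G : SimpleGraph V) (u v : V) : Set V :=
  {x | ∃ W : G.Walk u v, IsTolledWalk G W ∧ x ∈ W.support}

/-- A toll set: the toll intervals between its pairs cover the vertex set. -/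
def IsTollSet {V : Type*} (G : SimpleGraph V) (S : Set V) : Prop :=
  ∀ x : V, ∃ u ∈ S, ∃ v ∈ S, x ∈ tollInterval G u v

/-- The toll number: minimum size of a toll set. -/
noncomputable def tollNumber {V : Type*} (G : SimpleGraph V) : ℕ :=
  sInf {n | ∃ S : Set V, S.Finite ∧ S.ncard = n ∧ IsTollSet G S}

/-- `v` is a cut vertex if deleting it disconnects the graph. -/
def IsCutVertex {V : Type*} (G : SimpleGraph V) (v : V) : Prop :=
  ¬ (G.induce {w | w ≠ v}).Preconnected

/-- The extreme vertices of `G` with respect to toll convexity. -/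
def extremeVertices {V : Type*} (G : SimpleGraph V) : Set V :=
  {s | ∀ x y : V, x ≠ s → y ≠ s → s ∉ tollInterval G x y}

/-- The lexicographic product of simple graphs. -/
def lexProd {V W : Type*} (G : SimpleGraph V) (H : SimpleGraph W) : SimpleGraph (V × W) where
  Adj a b := G.Adj a.1 b.1 ∨ (a.1 = b.1 ∧ H.Adj a.2 b.2)
  symm := by
    constructor
    rintro a b (h | ⟨h1, h2⟩)
    · exact Or.inl h.symm
    · exact Or.inr ⟨h1.symm, h2.symm⟩
  loopless := by
    constructor
    rintro a (h | ⟨_, h⟩)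
    · exact G.irrefl h
    · exact H.irrefl h

/-!
A toll pair `{u, v}` of `G ∘ H` is non-adjacent, since an adjacent pair covers only itself. It
lies in a single layer `{g} × H`: a tolled walk between distinct non-adjacent layers never
returns to its first layer, because leaving it again would reach a vertex adjacent to the start,
which the toll condition allows only at position 1. Inside a layer, a tolled walk between
`(g, p)` and `(g, q)` either has length 2 and passes through a common neighbour, or it never
leaves the layer (its first vertex outside would be at positions 1 and `length - 1` at once) and
projects to a tolled walk of `H`. Hence the other layers are covered exactly when `g` is
universal, and the layer of `g` exactly when `{p, q}` is a toll set of `H`.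
-/

namespace SimpleGraph.Walk

variable {V : Type*} {G : SimpleGraph V} {u v : V}

lemma support_getD_eq_getVert (p : G.Walk u v) {i : ℕ} (hi : i ≤ p.length) (d : V) :
    p.support.getD i d = p.getVert i := by
  rw [List.getD_eq_getElem?_getD, ← p.getVert_eq_support_getElem? hi, Option.getD_some]

lemma support_eq_pair_iff (p : G.Walk u v) : p.support = [u, v] ↔ p.length = 1 := by
  refine ⟨fun h => by simpa [h] using p.length_support.symm, fun h => ?_⟩
  rcases p with _ | ⟨_, _ | ⟨_, _⟩⟩ <;> simp_all

lemma exists_eq_cons_cons_nil (p : G.Walk u v) (h : p.length = 2) :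
    ∃ (w : V) (huw : G.Adj u w) (hwv : G.Adj w v), p = cons huw (cons hwv nil) := by
  rcases p with _ | ⟨huw, _ | ⟨hwv, _ | ⟨_, _⟩⟩⟩ <;> simp_all

end SimpleGraph.Walk

section Toll

variable {V : Type*} {G : SimpleGraph V} {u v : V}

lemma isTolledWalk_iff (p : G.Walk u v) :
    IsTolledWalk G p ↔
      (u = v ∧ p.length = 0) ∨
      (G.Adj u v ∧ p.length = 1) ∨
      (¬ G.Adj u v ∧ u ≠ v ∧ 2 ≤ p.length ∧
        (∀ i, 0 < i → i < p.length → (G.Adj u (p.getVert i) ↔ i = 1)) ∧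
        (∀ i, 0 < i → i < p.length → (G.Adj v (p.getVert i) ↔ i = p.length - 1))) := by
  have hget : ∀ i, i < p.length → p.support.getD i u = p.getVert i :=
    fun i hi => p.support_getD_eq_getVert hi.le u
  unfold IsTolledWalk
  rw [p.support_eq_pair_iff]
  simp +contextual only [hget]

lemma IsTolledWalk.of_two_le_length {p : G.Walk u v} (hp : IsTolledWalk G p)
    (hlen : 2 ≤ p.length) :
    ¬ G.Adj u v ∧ u ≠ v ∧
      (∀ i, 0 < i → i < p.length → (G.Adj u (p.getVert i) ↔ i = 1)) ∧
      (∀ i, 0 < i → i < p.length → (G.Adj v (p.getVert i) ↔ i = p.length - 1)) := by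
  rw [isTolledWalk_iff] at hp
  rcases hp with ⟨-, h⟩ | ⟨-, h⟩ | ⟨hadj, hne, -, hu, hv⟩
  · omega
  · omega
  · exact ⟨hadj, hne, hu, hv⟩

lemma IsTolledWalk.reverse {p : G.Walk u v} (hp : IsTolledWalk G p) :
    IsTolledWalk G p.reverse := by
  rw [isTolledWalk_iff] at hp ⊢
  rw [Walk.length_reverse]
  rcases hp with ⟨rfl, h⟩ | ⟨hadj, h⟩ | ⟨hadj, hne, hlen, hu, hv⟩
  · exact Or.inl ⟨rfl, h⟩
  · exact Or.inr (Or.inl ⟨hadj.symm, h⟩)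
  · refine Or.inr (Or.inr ⟨fun h => hadj h.symm, hne.symm, hlen, fun i hi hi' => ?_,
      fun i hi hi' => ?_⟩)
    · rw [Walk.getVert_reverse, hv _ (by omega) (by omega)]
      omega
    · rw [Walk.getVert_reverse, hu _ (by omega) (by omega)]
      omega

lemma tollInterval_comm (u v : V) : tollInterval G u v = tollInterval G v u := by
  have key : ∀ u v : V, tollInterval G u v ⊆ tollInterval G v u :=
    fun u v x ⟨p, hp, hx⟩ => ⟨p.reverse, hp.reverse, by simpa using hx⟩
  exact (key u v).antisymm (key v u)

lemma tollInterval_self (u : V) : tollInterval G u u = {u} := by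
  refine Set.eq_singleton_iff_unique_mem.2 ⟨⟨Walk.nil, Or.inl ⟨rfl, rfl⟩, by simp⟩, ?_⟩
  rintro x ⟨p, hp, hx⟩
  rw [isTolledWalk_iff] at hp
  rcases hp with ⟨-, h⟩ | ⟨h, -⟩ | ⟨-, h, -⟩
  · cases p with
    | nil => simpa using hx
    | cons _ _ => simp at h
  · exact absurd h (G.irrefl)
  · exact absurd rfl h

lemma mem_tollInterval_of_adj {x : V} (huv : G.Adj u v) (hx : x ∈ tollInterval G u v) :
    x = u ∨ x = v := by
  obtain ⟨p, hp, hx⟩ := hx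
  rw [isTolledWalk_iff] at hp
  rcases hp with ⟨h, -⟩ | ⟨-, h⟩ | ⟨h, -⟩
  · exact absurd h huv.ne
  · simpa [(p.support_eq_pair_iff).2 h] using hx
  · exact absurd huv h

lemma mem_tollInterval_of_adj_of_adj {x : V} (hne : u ≠ v) (huv : ¬ G.Adj u v)
    (hux : G.Adj u x) (hxv : G.Adj x v) : x ∈ tollInterval G u v := by
  refine ⟨.cons hux (.cons hxv .nil), ?_, by simp⟩
  rw [isTolledWalk_iff]
  refine Or.inr (Or.inr ⟨huv, hne, by simp, fun i hi hi' => ?_, fun i hi hi' => ?_⟩) <;>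
  · obtain rfl : i = 1 := by simp at hi'; omega
    simp [hux, hxv.symm]

variable {V' : Type*} {G' : SimpleGraph V'}

lemma isTolledWalk_iff_of_getVert_eq (f : G ↪g G') {p : G.Walk u v} {q : G'.Walk (f u) (f v)}
    (hlen : q.length = p.length) (hget : ∀ i, q.getVert i = f (p.getVert i)) :
    IsTolledWalk G' q ↔ IsTolledWalk G p := by
  simp only [isTolledWalk_iff, hlen, hget, f.map_adj_iff, ne_eq, f.injective.eq_iff]

lemma mem_tollInterval_map (f : G ↪g G') {x : V} (hx : x ∈ tollInterval G u v) :
    f x ∈ tollInterval G' (f u) (f v) := by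
  obtain ⟨p, hp, hx⟩ := hx
  refine ⟨p.map f.toHom,
    (isTolledWalk_iff_of_getVert_eq f (by simp) (p.getVert_map _)).2 hp, ?_⟩
  rw [Walk.support_map]
  exact List.mem_map_of_mem hx

end Toll

section TollSet

variable {V : Type*} {G : SimpleGraph V} {a b : V}

lemma isTollSet_pair_iff :
    IsTollSet G {a, b} ↔ ∀ x, x = a ∨ x = b ∨ x ∈ tollInterval G a b := by
  simp only [IsTollSet, Set.mem_insert_iff, Set.mem_singleton_iff, exists_eq_or_imp,
    exists_eq_left, tollInterval_self, tollInterval_comm b a]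
  grind

lemma IsTollSet.eq_or_eq_of_adj (hS : IsTollSet G {a, b}) (hab : G.Adj a b) (x : V) :
    x = a ∨ x = b := by
  rcases isTollSet_pair_iff.1 hS x with h | h | h
  · exact Or.inl h
  · exact Or.inr h
  · exact mem_tollInterval_of_adj hab h

lemma IsTollSet.not_adj_of_ne_of_ne (hS : IsTollSet G {a, b}) {x : V} (hxa : x ≠ a)
    (hxb : x ≠ b) : ¬ G.Adj a b :=
  fun hab => (hS.eq_or_eq_of_adj hab x).elim hxa hxb

lemma IsTollSet.not_adj_of_ne_top (hS : IsTollSet G {a, b}) (hG : G ≠ ⊤) : ¬ G.Adj a b := by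
  intro hab
  refine hG (SimpleGraph.ext (funext₂ fun x y => propext ⟨fun h => h.ne, fun hxy => ?_⟩))
  rcases hS.eq_or_eq_of_adj hab x with rfl | rfl <;>
    rcases hS.eq_or_eq_of_adj hab y with rfl | rfl
  all_goals first | exact absurd rfl hxy | exact hab | exact hab.symm

lemma IsTollSet.two_le_ncard [Nontrivial V] {S : Set V} (hS : IsTollSet G S) (hSf : S.Finite) :
    2 ≤ S.ncard := by
  by_contra! h
  have hsub : S.Subsingleton := fun u hu v hv => (Set.ncard_le_one hSf).1 (by omega) u hu v hv
  have hmem : ∀ x, ∃ u ∈ S, x = u := by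
    intro x
    obtain ⟨u, hu, v, hv, hx⟩ := hS x
    rw [hsub hv hu, tollInterval_self] at hx
    exact ⟨u, hu, hx⟩
  obtain ⟨x, y, hxy⟩ := exists_pair_ne V
  obtain ⟨u, hu, rfl⟩ := hmem x
  obtain ⟨v, hv, rfl⟩ := hmem y
  exact hxy (hsub hu hv)

lemma tollNumber_eq_two_iff [Nontrivial V] :
    tollNumber G = 2 ↔ ∃ a b, a ≠ b ∧ IsTollSet G {a, b} := by
  set N := {n | ∃ S : Set V, S.Finite ∧ S.ncard = n ∧ IsTollSet G S}
  have hpair : 2 ∈ N ↔ ∃ a b, a ≠ b ∧ IsTollSet G {a, b} := by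
    refine ⟨fun ⟨S, _, hS2, hS⟩ => ?_,
      fun ⟨a, b, hab, hS⟩ => ⟨_, Set.toFinite _, Set.ncard_pair hab, hS⟩⟩
    obtain ⟨a, b, hab, rfl⟩ := Set.ncard_eq_two.1 hS2
    exact ⟨a, b, hab, hS⟩
  rw [← hpair]
  change sInf N = 2 ↔ 2 ∈ N
  refine ⟨fun h => h ▸ Nat.sInf_mem ?_,
    fun h => le_antisymm (Nat.sInf_le h) (le_csInf ⟨2, h⟩ ?_)⟩
  · by_contra hN
    rw [Set.not_nonempty_iff_eq_empty.1 hN, Nat.sInf_empty] at h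
    exact absurd h (by norm_num)
  · rintro _ ⟨S, hSf, rfl, hS⟩
    exact hS.two_le_ncard hSf

end TollSet

section LexProd

variable {V W : Type*} {G : SimpleGraph V} {H : SimpleGraph W}

lemma lexProd_adj_of_fst_eq {a b : V × W} (h : a.1 = b.1) :
    (lexProd G H).Adj a b ↔ H.Adj a.2 b.2 := by
  simp [lexProd, h]

lemma lexProd_adj_of_fst_ne {a b : V × W} (h : a.1 ≠ b.1) :
    (lexProd G H).Adj a b ↔ G.Adj a.1 b.1 := by
  simp [lexProd, h]

variable (G H) in
def lexProdLayer (g : V) : H ↪g lexProd G H where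
  toFun w := (g, w)
  inj' := Prod.mk_right_injective g
  map_rel_iff' := lexProd_adj_of_fst_eq rfl

lemma exists_adj_fst_of_fst_ne {a b : V × W} (T : (lexProd G H).Walk a b) {g : V} {n m : ℕ}
    (hnm : n ≤ m) (hm : m ≤ T.length) (hn : (T.getVert n).1 = g) (hm' : (T.getVert m).1 ≠ g) :
    ∃ k, n ≤ k ∧ k < m ∧ G.Adj g (T.getVert (k + 1)).1 := by
  induction m, hnm using Nat.le_induction with
  | base => exact absurd hn hm'
  | succ m hnm ih =>
    by_cases hmg : (T.getVert m).1 = g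
    · have hadj := T.adj_getVert_succ (show m < T.length by omega)
      rw [lexProd_adj_of_fst_ne (by rw [hmg]; exact Ne.symm hm'), hmg] at hadj
      exact ⟨m, hnm, m.lt_succ_self, hadj⟩
    · obtain ⟨k, hnk, hkm, hadj⟩ := ih (by omega) hmg
      exact ⟨k, hnk, by omega, hadj⟩

end LexProd

section LexProdToll

variable {V W : Type*} {G : SimpleGraph V} {H : SimpleGraph W}

lemma IsTolledWalk.fst_getVert_eq_of_length_ne_two {g : V} {p q : W}
    {T : (lexProd G H).Walk (g, p) (g, q)} (hT : IsTolledWalk _ T) (hlen : T.length ≠ 2)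
    {n : ℕ} (hn : n ≤ T.length) : (T.getVert n).1 = g := by
  by_contra hne
  obtain ⟨k, -, hkn, hadj⟩ := exists_adj_fst_of_fst_ne T (Nat.zero_le n) hn (by simp) hne
  have hk : k + 1 < T.length := by
    refine lt_of_le_of_ne (by omega) fun h => ?_
    rw [h, T.getVert_length] at hadj
    exact G.irrefl hadj
  obtain ⟨-, -, hp, hq⟩ := hT.of_two_le_length (by omega)
  have h1 := (hp (k + 1) (by omega) hk).1 (Or.inl hadj)
  have h2 := (hq (k + 1) (by omega) hk).1 (Or.inl hadj)
  omega

lemma exists_walk_getVert_eq_of_fst_eq {g : V} :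
    ∀ {a b : V × W} (T : (lexProd G H).Walk a b), (∀ x ∈ T.support, x.1 = g) →
      ∃ T' : H.Walk a.2 b.2, T'.length = T.length ∧ ∀ i, T.getVert i = (g, T'.getVert i)
  | a, _, .nil, hT => ⟨.nil, rfl, fun _ => by simp [← hT a (by simp)]⟩
  | a, _, .cons (v := x) hax T, hT => by
    have ha : a.1 = g := hT a (by simp)
    have hx : x.1 = g := hT x (by simp)
    obtain ⟨T', hlen, hget⟩ :=
      exists_walk_getVert_eq_of_fst_eq T fun y hy => hT y (by simp [hy])
    refine ⟨.cons ((lexProd_adj_of_fst_eq (ha.trans hx.symm)).1 hax) T', by simp [hlen], ?_⟩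
    rintro (_ | i)
    · simp [← ha]
    · simpa using hget i

lemma mem_tollInterval_of_mk_mem_tollInterval_lexProd {g : V} {p q w : W}
    (h : (g, w) ∈ tollInterval (lexProd G H) (g, p) (g, q)) :
    w = p ∨ w = q ∨ w ∈ tollInterval H p q := by
  obtain ⟨T, hT, hmem⟩ := h
  by_cases hlen : T.length = 2
  · obtain ⟨hpq, hne, -⟩ := hT.of_two_le_length hlen.ge
    obtain ⟨x, hpx, hxq, rfl⟩ := T.exists_eq_cons_cons_nil hlen
    simp only [Walk.support_cons, Walk.support_nil, List.mem_cons, Prod.mk.injEq, true_and,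
      List.not_mem_nil, or_false] at hmem
    rcases hmem with h | rfl | h
    · exact Or.inl h
    · refine Or.inr (Or.inr (mem_tollInterval_of_adj_of_adj (by simpa using hne)
        (by simpa [lexProd_adj_of_fst_eq] using hpq) ?_ ?_))
      · simpa [lexProd_adj_of_fst_eq] using hpx
      · simpa [lexProd_adj_of_fst_eq] using hxq
    · exact Or.inr (Or.inl h)
  · obtain ⟨T', hlen', hget⟩ := exists_walk_getVert_eq_of_fst_eq T fun x hx => by
      obtain ⟨n, rfl, hn⟩ := Walk.mem_support_iff_exists_getVert.1 hx
      exact hT.fst_getVert_eq_of_length_ne_two hlen hn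
    obtain ⟨n, hn, hnlen⟩ := Walk.mem_support_iff_exists_getVert.1 hmem
    refine Or.inr (Or.inr ⟨T', (isTolledWalk_iff_of_getVert_eq (lexProdLayer G H g)
      hlen'.symm hget).1 hT, ?_⟩)
    rw [hget, Prod.mk.injEq] at hn
    exact hn.2 ▸ T'.getVert_mem_support n

lemma adj_fst_of_mem_tollInterval_lexProd {g : V} {p q : W} {x : V × W}
    (hx : x ∈ tollInterval (lexProd G H) (g, p) (g, q)) (hxg : x.1 ≠ g) : G.Adj g x.1 := by
  obtain ⟨T, hT, hmem⟩ := hx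
  by_cases hlen : T.length = 2
  · obtain ⟨y, hpy, _, rfl⟩ := T.exists_eq_cons_cons_nil hlen
    simp only [Walk.support_cons, Walk.support_nil, List.mem_cons, List.not_mem_nil,
      or_false] at hmem
    rcases hmem with rfl | rfl | rfl
    · exact absurd rfl hxg
    · exact (lexProd_adj_of_fst_ne (Ne.symm hxg)).1 hpy
    · exact absurd rfl hxg
  · obtain ⟨n, rfl, hn⟩ := Walk.mem_support_iff_exists_getVert.1 hmem
    exact absurd (hT.fst_getVert_eq_of_length_ne_two hlen hn) hxg

lemma snd_eq_of_mk_mem_tollInterval_lexProd {g₁ g₂ : V} {b₁ b₂ w : W}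
    (hne : g₁ ≠ g₂) (hadj : ¬ G.Adj g₁ g₂)
    (hw : (g₁, w) ∈ tollInterval (lexProd G H) (g₁, b₁) (g₂, b₂)) : w = b₁ := by
  obtain ⟨T, hT, hmem⟩ := hw
  obtain ⟨n, hn, hnlen⟩ := Walk.mem_support_iff_exists_getVert.1 hmem
  rcases Nat.eq_zero_or_pos n with rfl | hpos
  · simpa using hn.symm
  obtain ⟨k, hnk, hk, hk'⟩ := exists_adj_fst_of_fst_ne T hnlen le_rfl (by rw [hn])
    (by simpa using hne.symm)
  rcases Nat.lt_or_ge (k + 1) T.length with hlt | hge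
  · obtain ⟨-, -, hfirst, -⟩ := hT.of_two_le_length (by omega)
    have := (hfirst (k + 1) (by omega) hlt).1 (Or.inl hk')
    omega
  · rw [show k + 1 = T.length by omega, T.getVert_length] at hk'
    exact absurd hk' hadj

end LexProdToll

section LexProdTollSet

variable {V W : Type*} {G : SimpleGraph V} {H : SimpleGraph W}

lemma IsTollSet.fst_eq_of_lexProd [Nontrivial V] [Nontrivial W] {g₁ g₂ : V} {b₁ b₂ : W}
    (hS : IsTollSet (lexProd G H) {(g₁, b₁), (g₂, b₂)}) : g₁ = g₂ := by
  by_contra hne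
  have hadj : ¬ G.Adj g₁ g₂ := by
    obtain ⟨a, ha⟩ := exists_ne g₁
    obtain ⟨b, hb⟩ := exists_ne b₂
    exact fun h =>
      hS.not_adj_of_ne_of_ne (x := (a, b)) (by simp [ha]) (by simp [hb]) (Or.inl h)
  obtain ⟨w, hw⟩ := exists_ne b₁
  rcases isTollSet_pair_iff.1 hS (g₁, w) with h | h | h
  · exact hw (Prod.mk.inj h).2
  · exact hne (Prod.mk.inj h).1
  · exact hw (snd_eq_of_mk_mem_tollInterval_lexProd hne hadj h)

lemma IsTollSet.adj_of_lexProd {g a : V} {p q : W}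
    (hS : IsTollSet (lexProd G H) {(g, p), (g, q)}) (ha : a ≠ g) : G.Adj g a := by
  rcases isTollSet_pair_iff.1 hS (a, p) with h | h | h
  · exact absurd (Prod.mk.inj h).1 ha
  · exact absurd (Prod.mk.inj h).1 ha
  · exact adj_fst_of_mem_tollInterval_lexProd h ha

lemma IsTollSet.of_lexProd {g : V} {p q : W} (hS : IsTollSet (lexProd G H) {(g, p), (g, q)}) :
    IsTollSet H {p, q} := by
  refine isTollSet_pair_iff.2 fun w => ?_
  rcases isTollSet_pair_iff.1 hS (g, w) with h | h | h
  · exact Or.inl (Prod.mk.inj h).2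
  · exact Or.inr (Or.inl (Prod.mk.inj h).2)
  · exact mem_tollInterval_of_mk_mem_tollInterval_lexProd h

lemma IsTollSet.lexProd {g : V} {p q : W} (hg : ∀ a, a ≠ g → G.Adj g a) (hne : p ≠ q)
    (hpq : ¬ H.Adj p q) (hS : IsTollSet H {p, q}) :
    IsTollSet (lexProd G H) {(g, p), (g, q)} := by
  refine isTollSet_pair_iff.2 fun ⟨a, w⟩ => ?_
  by_cases ha : a = g
  · subst ha
    rcases isTollSet_pair_iff.1 hS w with rfl | rfl | hw
    · exact Or.inl rfl
    · exact Or.inr (Or.inl rfl)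
    · exact Or.inr (Or.inr (mem_tollInterval_map (lexProdLayer G H a) hw))
  · exact Or.inr (Or.inr (mem_tollInterval_of_adj_of_adj (by simpa using hne)
      (by simpa [lexProd_adj_of_fst_eq] using hpq) (Or.inl (hg a ha)) (Or.inl (hg a ha).symm)))

end LexProdTollSet

theorem stmt13_general {V W : Type*} [Nontrivial V] [Nontrivial W]
    (G : SimpleGraph V) (H : SimpleGraph W) (hH : H ≠ ⊤) :
    tollNumber (lexProd G H) = 2 ↔
      (∃ g : V, ∀ w : V, w ≠ g → G.Adj g w) ∧ tollNumber H = 2 := by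
  rw [tollNumber_eq_two_iff, tollNumber_eq_two_iff]
  constructor
  · rintro ⟨⟨g, p⟩, ⟨g', q⟩, hne, hS⟩
    obtain rfl := hS.fst_eq_of_lexProd
    exact ⟨⟨g, fun a ha => hS.adj_of_lexProd ha⟩, p, q, by simpa using hne, hS.of_lexProd⟩
  · rintro ⟨⟨g, hg⟩, p, q, hne, hS⟩
    exact ⟨(g, p), (g, q), by simpa using hne, hS.lexProd hg hne (hS.not_adj_of_ne_top hH)⟩

theorem stmt13 {V W : Type*} [Fintype V] [Fintype W] [Nontrivial V] [Nontrivial W]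
    (G : SimpleGraph V) (H : SimpleGraph W)
    (hHK2 : ¬ Nonempty (H ≃g (⊤ : SimpleGraph (Fin 2)))) (hH : H ≠ ⊤) :
    tollNumber (lexProd G H) = 2 ↔
      (∃ g : V, ∀ w : V, w ≠ g → G.Adj g w) ∧ tollNumber H = 2 :=
  stmt13_general G H hH
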